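/- Let q ≥ 2 be an integer and let λ be a partition of n ≥ 1. Define c_λ = ∑_{b∈λ} c(b) (an integer, possibly negative), n_λ = ∑_{i} (i−1) λ_i, and t_λ = q^{n_λ} · [n]_q! / ∏_{b∈λ} [h(b)]_q, where h(b) is the hook length of the box b. Then s(λ) := q^{c_λ} · t_λ ≤ q^{n(n−1)/2}, i.e. q^{c_λ + n_λ} · [n]_q! / ∏_{b∈λ} [h(b)]_q ≤ q^{\binom{n}{2}} (an inequality of real numbers, with q^{c_λ} interpreted as a power with integer exponent). -/
import Mathlib


/-- The hook length of the box `b = (i, j)` (row `i`, column `j`, `0`-based) of the Young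
diagram `μ`: `h(b) = (λ_i − j) + (λ'_j − i) − 1` (arm + leg + 1). -/
def hookLen (μ : YoungDiagram) (b : ℕ × ℕ) : ℕ :=
  (μ.rowLen b.1 - b.2) + (μ.colLen b.2 - b.1) - 1

/-- `[m]_q = 1 + q + ⋯ + q^{m−1}`. -/
def qInt (q m : ℕ) : ℕ := ∑ i ∈ Finset.range m, q ^ i

/-- `[n]_q! = [1]_q [2]_q ⋯ [n]_q`. -/
def qFactorial (q n : ℕ) : ℕ := ∏ k ∈ Finset.range n, qInt q (k + 1)

lemma qInt_succ (q m : ℕ) : qInt q (m + 1) = 1 + q * qInt q m := by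
  simp only [qInt, Finset.sum_range_succ']
  simp [Finset.mul_sum, pow_succ, mul_comm]
  omega

lemma qInt_one (q : ℕ) : qInt q 1 = 1 := by simp [qInt]

lemma qInt_pos {q : ℕ} (hq : 2 ≤ q) {m : ℕ} (hm : 1 ≤ m) : 0 < qInt q m := by
  obtain ⟨k, rfl⟩ := Nat.exists_eq_add_of_le hm
  rw [add_comm, qInt_succ]; omega

lemma qInt_lt_pow {q : ℕ} (hq : 2 ≤ q) (m : ℕ) : qInt q m < q ^ m := by
  induction m with
  | zero => simp [qInt]
  | succ m ih =>
    rw [qInt_succ, pow_succ]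
    have h2 : q * (qInt q m + 1) ≤ q * q ^ m := Nat.mul_le_mul_left q (by omega)
    have h3 : 2 * 1 ≤ q * qInt q m + q * 1 := by
      rcases Nat.eq_zero_or_pos (qInt q m) with h | h
      · simp [h]; omega
      · have : 1 * 1 ≤ q * qInt q m := Nat.mul_le_mul (by omega) h
        omega
    calc 1 + q * qInt q m < q * qInt q m + q := by omega
    _ = q * (qInt q m + 1) := by ring
    _ ≤ q * q ^ m := h2
    _ = q ^ m * q := by ring

lemma q_mul_qInt_le (q m : ℕ) : q * qInt q m ≤ qInt q (m + 1) := by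
  rw [qInt_succ]; omega

lemma qFactorial_succ (q n : ℕ) : qFactorial q (n + 1) = qFactorial q n * qInt q (n + 1) :=
  Finset.prod_range_succ _ _

lemma rowLen_eq_of {ν : YoungDiagram} {i ℓ : ℕ} (h : ∀ j, (i, j) ∈ ν ↔ j < ℓ) :
    ν.rowLen i = ℓ := by
  rcases Nat.lt_trichotomy (ν.rowLen i) ℓ with h1 | h1 | h1
  · have := YoungDiagram.mem_iff_lt_rowLen.mp ((h _).mpr h1)
    omega
  · exact h1
  · have := (h ℓ).mp (YoungDiagram.mem_iff_lt_rowLen.mpr h1)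
    omega

lemma colLen_eq_of {ν : YoungDiagram} {j ℓ : ℕ} (h : ∀ i, (i, j) ∈ ν ↔ i < ℓ) :
    ν.colLen j = ℓ := by
  rcases Nat.lt_trichotomy (ν.colLen j) ℓ with h1 | h1 | h1
  · have := YoungDiagram.mem_iff_lt_colLen.mp ((h _).mpr h1)
    omega
  · exact h1
  · have := (h ℓ).mp (YoungDiagram.mem_iff_lt_colLen.mpr h1)
    omega

lemma hookLen_pos {μ : YoungDiagram} {b : ℕ × ℕ} (hb : b ∈ μ.cells) : 1 ≤ hookLen μ b := by
  obtain ⟨i, j⟩ := b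
  rw [YoungDiagram.mem_cells] at hb
  have h1 : j < μ.rowLen i := YoungDiagram.mem_iff_lt_rowLen.mp hb
  have h2 : i < μ.colLen j := YoungDiagram.mem_iff_lt_colLen.mp hb
  simp only [hookLen]
  omega

lemma key_nat (q : ℕ) (hq : 2 ≤ q) : ∀ n : ℕ, ∀ μ : YoungDiagram, μ.cells.card = n →
    q ^ (∑ b ∈ μ.cells, b.2) * qFactorial q n
      ≤ q ^ (n * (n - 1) / 2) * ∏ b ∈ μ.cells, qInt q (hookLen μ b) := by
  intro n
  induction n using Nat.strong_induction_on with
  | _ n IH =>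
  intro μ hμ
  by_cases hr0 : μ.colLen 0 ≤ 1
  case pos =>
    -- single-row case: equality
    have hcells0 : μ.cells = (Finset.range (μ.rowLen 0)).image (fun j => (0, j)) := by
      ext ⟨i, j⟩
      simp only [Finset.mem_image, Finset.mem_range, YoungDiagram.mem_cells]
      constructor
      · intro h
        have hi : i < μ.colLen j := YoungDiagram.mem_iff_lt_colLen.mp h
        have hj : μ.colLen j ≤ μ.colLen 0 := μ.colLen_anti 0 j (Nat.zero_le j)
        have hi0 : i = 0 := by omega
        subst hi0
        exact ⟨j, YoungDiagram.mem_iff_lt_rowLen.mp h, rfl⟩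
      · rintro ⟨j', hj', h⟩
        obtain ⟨rfl, rfl⟩ : (0 : ℕ) = i ∧ j' = j := by
          constructor <;> [exact (congrArg Prod.fst h); exact (congrArg Prod.snd h)]
        exact YoungDiagram.mem_iff_lt_rowLen.mpr hj'
    have hinj : Function.Injective (fun j => ((0 : ℕ), j) : ℕ → ℕ × ℕ) := by
      intro a b h; exact congrArg Prod.snd h
    have hL : μ.rowLen 0 = n := by
      rw [← hμ, hcells0, Finset.card_image_of_injective _ hinj, Finset.card_range]
    have hcells : μ.cells = (Finset.range n).image (fun j => (0, j)) := by
      rw [hcells0, hL]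
    have hsum : (∑ b ∈ μ.cells, b.2) = n * (n - 1) / 2 := by
      rw [hcells, Finset.sum_image (fun a _ b _ h => hinj h)]
      exact Finset.sum_range_id n
    have hhook : ∀ j < n, hookLen μ (0, j) = n - j := by
      intro j hj
      have hmem : ((0 : ℕ), j) ∈ μ := YoungDiagram.mem_iff_lt_rowLen.mpr (by omega)
      have h1 : 0 < μ.colLen j := by
        have := YoungDiagram.mem_iff_lt_colLen.mp hmem; omega
      have h2 : μ.colLen j ≤ 1 := le_trans (μ.colLen_anti 0 j (Nat.zero_le j)) hr0
      simp only [hookLen]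
      rw [hL]
      omega
    have hprod : (∏ b ∈ μ.cells, qInt q (hookLen μ b)) = qFactorial q n := by
      rw [hcells, Finset.prod_image (fun a _ b _ h => hinj h)]
      rw [show (∏ j ∈ Finset.range n, qInt q (hookLen μ (0, j)))
            = ∏ j ∈ Finset.range n, qInt q (n - 1 - j + 1) by
        apply Finset.prod_congr rfl
        intro j hj
        rw [Finset.mem_range] at hj
        rw [hhook j hj]
        congr 1
        omega]
      exact Finset.prod_range_reflect (fun k => qInt q (k + 1)) n
    rw [hsum, hprod]
  case neg =>
    push_neg at hr0
    set r := μ.colLen 0 - 1 with hrdef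
    set c := μ.rowLen r - 1 with hcdef
    have hcol0 : μ.colLen 0 = r + 1 := by omega
    have hr1 : 1 ≤ r := by omega
    have hr0mem : (r, 0) ∈ μ := YoungDiagram.mem_iff_lt_colLen.mpr (by omega)
    have hrowr_pos : 0 < μ.rowLen r := by
      have := YoungDiagram.mem_iff_lt_rowLen.mp hr0mem; omega
    have hrowr : μ.rowLen r = c + 1 := by omega
    have hcorner : (r, c) ∈ μ := YoungDiagram.mem_iff_lt_rowLen.mpr (by omega)
    have hcolc : μ.colLen c = r + 1 := by
      have h1 : r < μ.colLen c := YoungDiagram.mem_iff_lt_colLen.mp hcorner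
      have h2 : μ.colLen c ≤ μ.colLen 0 := μ.colLen_anti 0 c (Nat.zero_le c)
      omega
    -- define μ' = μ minus the corner
    have hlower : IsLowerSet (↑(μ.cells.erase (r, c)) : Set (ℕ × ℕ)) := by
      intro x y hyx hx
      simp only [Finset.coe_erase, Set.mem_diff, Set.mem_singleton_iff, Finset.mem_coe,
        YoungDiagram.mem_cells] at hx ⊢
      obtain ⟨hxμ, hxne⟩ := hx
      refine ⟨μ.isLowerSet hyx hxμ, ?_⟩
      rintro rfl
      obtain ⟨x1, x2⟩ := x
      obtain ⟨h1, h2⟩ := hyx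
      simp only at h1 h2
      have hx1 : x1 < μ.colLen x2 := YoungDiagram.mem_iff_lt_colLen.mp hxμ
      have hcx2 : μ.colLen x2 ≤ μ.colLen 0 := μ.colLen_anti 0 x2 (Nat.zero_le x2)
      have hx1r : x1 = r := by omega
      subst hx1r
      have hx2 : x2 < μ.rowLen r := YoungDiagram.mem_iff_lt_rowLen.mp hxμ
      have : x2 = c := by omega
      exact hxne (by simp [this])
    set μ' : YoungDiagram := ⟨μ.cells.erase (r, c), hlower⟩ with hμ'def
    have hmem' : ∀ p : ℕ × ℕ, p ∈ μ' ↔ p ≠ (r, c) ∧ p ∈ μ := by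
      intro p
      change p ∈ μ.cells.erase (r, c) ↔ _
      rw [Finset.mem_erase, YoungDiagram.mem_cells]
    have hcells' : μ'.cells = μ.cells.erase (r, c) := rfl
    have hcard' : μ'.cells.card = n - 1 := by
      rw [hcells', Finset.card_erase_of_mem (by rwa [YoungDiagram.mem_cells]), hμ]
    have h00 : ((0 : ℕ), (0 : ℕ)) ∈ μ' := by
      rw [hmem']
      refine ⟨?_, μ.isLowerSet (by simp) hr0mem⟩
      intro h
      have := congrArg Prod.fst h
      simp only at this
      omega
    have hn2 : 2 ≤ n := by
      have h1 : 1 ≤ μ'.cells.card := Finset.card_pos.mpr ⟨_, (YoungDiagram.mem_cells _).mpr h00⟩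
      omega
    -- rowLen and colLen of μ'
    have hrow' : ∀ i, μ'.rowLen i = if i = r then c else μ.rowLen i := by
      intro i
      split_ifs with hi
      · subst hi
        apply rowLen_eq_of
        intro j
        rw [hmem']
        constructor
        · rintro ⟨hne, hmem⟩
          have := YoungDiagram.mem_iff_lt_rowLen.mp hmem
          have : j ≠ c := fun h => hne (by simp [h])
          omega
        · intro hj
          exact ⟨by simp; omega, YoungDiagram.mem_iff_lt_rowLen.mpr (by omega)⟩
      · apply rowLen_eq_of
        intro j
        rw [hmem']
        constructor
        · rintro ⟨_, hmem⟩
          exact YoungDiagram.mem_iff_lt_rowLen.mp hmem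
        · intro hj
          exact ⟨by simp [hi], YoungDiagram.mem_iff_lt_rowLen.mpr hj⟩
    have hcol' : ∀ j, μ'.colLen j = if j = c then r else μ.colLen j := by
      intro j
      split_ifs with hj
      · subst hj
        apply colLen_eq_of
        intro i
        rw [hmem']
        constructor
        · rintro ⟨hne, hmem⟩
          have := YoungDiagram.mem_iff_lt_colLen.mp hmem
          have : i ≠ r := fun h => hne (by simp [h])
          omega
        · intro hi
          exact ⟨by simp; omega, YoungDiagram.mem_iff_lt_colLen.mpr (by omega)⟩
      · apply colLen_eq_of
        intro i
        rw [hmem']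
        constructor
        · rintro ⟨_, hmem⟩
          exact YoungDiagram.mem_iff_lt_colLen.mp hmem
        · intro hi
          exact ⟨by simp [hj], YoungDiagram.mem_iff_lt_colLen.mpr hi⟩
    -- per-cell hook inequality
    have hcell : ∀ b ∈ μ'.cells,
        (if b.1 = r ∨ b.2 = c then q else 1) * qInt q (hookLen μ' b)
          ≤ qInt q (hookLen μ b) := by
      rintro ⟨i, j⟩ hb
      have hbμ' : (i, j) ∈ μ' := hb
      rw [hmem'] at hbμ'
      obtain ⟨hne, hbμ⟩ := hbμ'
      have hj : j < μ.rowLen i := YoungDiagram.mem_iff_lt_rowLen.mp hbμ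
      have hi : i < μ.colLen j := YoungDiagram.mem_iff_lt_colLen.mp hbμ
      simp only [hookLen, hrow' i, hcol' j]
      by_cases hir : i = r
      · subst hir
        have hjc : j ≠ c := fun h => hne (by rw [h])
        have hjc' : j < c := by
          have := hrowr; omega
        simp only [if_neg hjc, eq_self_iff_true, if_true, ite_true, true_or]
        have hrw : (μ.rowLen r - j) + (μ.colLen j - r) - 1
            = ((c - j) + (μ.colLen j - r) - 1) + 1 := by
          have h3 := hrowr
          omega
        rw [hrw]
        exact q_mul_qInt_le q _
      · by_cases hjc : j = c
        · subst hjc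
          have hir' : i < r := by
            have h3 := hcolc; omega
          simp only [if_neg hir, eq_self_iff_true, if_true, ite_true, or_true]
          have hrw : (μ.rowLen i - c) + (μ.colLen c - i) - 1
              = ((μ.rowLen i - c) + (r - i) - 1) + 1 := by
            have h3 := hcolc
            omega
          rw [hrw]
          exact q_mul_qInt_le q _
        · simp only [if_neg hir, if_neg hjc, if_neg (not_or.mpr ⟨hir, hjc⟩), one_mul]
          exact le_refl _
    -- counting affected cells
    have hcount : (μ'.cells.filter (fun b => b.1 = r ∨ b.2 = c)).card = r + c := by
      rw [Finset.filter_or]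
      rw [Finset.card_union_of_disjoint]
      · have h1 : (μ'.cells.filter (fun b => b.1 = r)) = μ'.row r := by
          rw [YoungDiagram.row]
        have h2 : (μ'.cells.filter (fun b => b.2 = c)) = μ'.col c := by
          rw [YoungDiagram.col]
        rw [h1, h2, ← YoungDiagram.rowLen_eq_card, ← YoungDiagram.colLen_eq_card,
          hrow' r, hcol' c]
        simp [add_comm]
      · rw [Finset.disjoint_left]
        rintro ⟨i, j⟩ h1 h2
        simp only [Finset.mem_filter] at h1 h2
        have : ((i, j) : ℕ × ℕ) ∈ μ' := h1.1
        rw [hmem'] at this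
        exact this.1 (by rw [h1.2, h2.2])
    -- product inequality
    have hprodle : q ^ (r + c) * (∏ b ∈ μ'.cells, qInt q (hookLen μ' b))
        ≤ ∏ b ∈ μ'.cells, qInt q (hookLen μ b) := by
      calc q ^ (r + c) * (∏ b ∈ μ'.cells, qInt q (hookLen μ' b))
          = (∏ b ∈ μ'.cells, (if b.1 = r ∨ b.2 = c then q else 1))
            * (∏ b ∈ μ'.cells, qInt q (hookLen μ' b)) := by
            congr 1
            rw [Finset.prod_ite, Finset.prod_const, Finset.prod_const, one_pow, mul_one,
              hcount]
        _ = ∏ b ∈ μ'.cells, ((if b.1 = r ∨ b.2 = c then q else 1) * qInt q (hookLen μ' b)) := by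
            rw [Finset.prod_mul_distrib]
        _ ≤ ∏ b ∈ μ'.cells, qInt q (hookLen μ b) := Finset.prod_le_prod' hcell
    -- corner hook is 1
    have hcorner1 : hookLen μ (r, c) = 1 := by
      simp only [hookLen]
      rw [hrowr, hcolc]
      omega
    -- split product over μ
    have hsplitP : (∏ b ∈ μ.cells, qInt q (hookLen μ b))
        = ∏ b ∈ μ'.cells, qInt q (hookLen μ b) := by
      rw [hcells']
      rw [← Finset.mul_prod_erase μ.cells _ ((YoungDiagram.mem_cells _).mpr hcorner)]
      rw [hcorner1, qInt_one, one_mul]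
    -- split sum over μ
    have hsplitS : (∑ b ∈ μ.cells, b.2) = c + ∑ b ∈ μ'.cells, b.2 := by
      rw [hcells']
      exact (Finset.add_sum_erase μ.cells _ ((YoungDiagram.mem_cells _).mpr hcorner)).symm
    -- apply IH
    have hIH := IH (n - 1) (by omega) μ' hcard'
    -- arithmetic facts
    have hNN : n * (n - 1) / 2 = (n - 1) * (n - 1 - 1) / 2 + (n - 1) := by
      obtain ⟨m, rfl⟩ : ∃ m, n = m + 2 := ⟨n - 2, by omega⟩
      have h1 : (m + 2) * (m + 2 - 1) = (m + 1) * m + (m + 1) * 2 := by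
        rw [show m + 2 - 1 = m + 1 from rfl]; ring
      rw [h1]
      rw [Nat.add_mul_div_right _ _ (by norm_num : 0 < 2)]
      simp [Nat.add_sub_cancel]
    have hfac : qFactorial q n = qFactorial q (n - 1) * qInt q n := by
      obtain ⟨m, rfl⟩ : ∃ m, n = m + 2 := ⟨n - 2, by omega⟩
      rw [show m + 2 - 1 = m + 1 by rfl]
      exact qFactorial_succ q (m + 1)
    have hqn : qInt q n ≤ q ^ (n - 1 + r) := by
      calc qInt q n ≤ q ^ n := le_of_lt (qInt_lt_pow hq n)
        _ ≤ q ^ (n - 1 + r) := Nat.pow_le_pow_right (by omega) (by omega)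
    -- assemble
    rw [hsplitS, hsplitP, hfac, hNN]
    calc q ^ (c + ∑ b ∈ μ'.cells, b.2) * (qFactorial q (n - 1) * qInt q n)
        = ((q ^ (∑ b ∈ μ'.cells, b.2)) * qFactorial q (n - 1)) * (qInt q n * q ^ c) := by
          rw [pow_add]; ring
      _ ≤ ((q ^ ((n - 1) * (n - 1 - 1) / 2)) * ∏ b ∈ μ'.cells, qInt q (hookLen μ' b))
            * (q ^ (n - 1 + r) * q ^ c) :=
          Nat.mul_le_mul hIH (Nat.mul_le_mul_right _ hqn)
      _ = q ^ ((n - 1) * (n - 1 - 1) / 2 + (n - 1))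
            * (q ^ (r + c) * ∏ b ∈ μ'.cells, qInt q (hookLen μ' b)) := by
          rw [pow_add, pow_add, pow_add]; ring
      _ ≤ q ^ ((n - 1) * (n - 1 - 1) / 2 + (n - 1))
            * ∏ b ∈ μ'.cells, qInt q (hookLen μ b) :=
          Nat.mul_le_mul_left _ hprodle

/-- For an integer `q ≥ 2` and a partition `λ ⊢ n`, with
`c_λ = ∑_{b∈λ} c(b)`, `n_λ = ∑_i (i−1)λ_i = ∑_{b∈λ} (row of b, 0-based)` and
`t_λ = q^{n_λ} [n]_q! / ∏_{b∈λ} [h(b)]_q`, one has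
`s(λ) = q^{c_λ} t_λ ≤ q^{n(n−1)/2}`. -/
theorem content_hook_bound
    (q : ℕ) (hq : 2 ≤ q) (n : ℕ) (hn : 1 ≤ n) (μ : YoungDiagram)
    (hμ : μ.cells.card = n) :
    (q : ℝ) ^ (∑ b ∈ μ.cells, ((b.2 : ℤ) - (b.1 : ℤ)))
        * (q : ℝ) ^ (∑ b ∈ μ.cells, b.1)
        * (qFactorial q n : ℝ) / (∏ b ∈ μ.cells, (qInt q (hookLen μ b) : ℝ))
      ≤ (q : ℝ) ^ (n * (n - 1) / 2) := by
  have hq0 : (0 : ℝ) < (q : ℝ) := by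
    have : (0 : ℕ) < q := by omega
    exact_mod_cast this
  have hP : (0 : ℝ) < ∏ b ∈ μ.cells, (qInt q (hookLen μ b) : ℝ) := by
    apply Finset.prod_pos
    intro b hb
    have := qInt_pos hq (hookLen_pos hb)
    exact_mod_cast this
  rw [div_le_iff₀ hP]
  have hz : (∑ b ∈ μ.cells, ((b.2 : ℤ) - (b.1 : ℤ))) + ((∑ b ∈ μ.cells, b.1 : ℕ) : ℤ)
      = ((∑ b ∈ μ.cells, b.2 : ℕ) : ℤ) := by
    push_cast
    rw [← Finset.sum_add_distrib]
    apply Finset.sum_congr rfl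
    intro b _
    ring
  have hAB : (q : ℝ) ^ (∑ b ∈ μ.cells, ((b.2 : ℤ) - (b.1 : ℤ)))
        * (q : ℝ) ^ (∑ b ∈ μ.cells, b.1)
      = (q : ℝ) ^ (∑ b ∈ μ.cells, b.2) := by
    rw [← zpow_natCast (q : ℝ) (∑ b ∈ μ.cells, b.1),
      ← zpow_add₀ (ne_of_gt hq0), hz, zpow_natCast]
  rw [hAB]
  have h := (Nat.cast_le (α := ℝ)).mpr (key_nat q hq n μ hμ)
  push_cast at h
  exact h
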